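/- Let (X,s) be a strongly stratified sample of ℝ^N with X compact, s continuous, and possessing cylinder structure. Then: (i) for every u ∈ (0,1) and every ε > 0 there is δ > 0 such that every strongly stratified sample (X',s') that is δ-close to (X,s) satisfies max(d_H(X,X'), d_H(X_{≤u}, X'_{≤u})) ≤ ε; and (ii) for every v ∈ Ω and every ε > 0 there is δ > 0 such that every strongly stratified sample (X',s') that is δ-close to (X,s) satisfies: each of the three componentwise Hausdorff distances between D_v(X,s) and D_v(X',s') is at most ε. (That is, the forgetful map F_u and the diagram map D_v are continuous at (X,s).) -/
import Mathlib


open Metric Set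
open scoped ENNReal

namespace Stmt10

variable {N : ℕ}

/-- Sublevel set `X_{≤ b}`. -/
def sub (X : Set (EuclideanSpace ℝ (Fin N))) (s : EuclideanSpace ℝ (Fin N) → ℝ) (b : ℝ) :
    Set (EuclideanSpace ℝ (Fin N)) := {x | x ∈ X ∧ s x ≤ b}

/-- Superlevel set `X_{≥ a}`. -/
def supl (X : Set (EuclideanSpace ℝ (Fin N))) (s : EuclideanSpace ℝ (Fin N) → ℝ) (a : ℝ) :
    Set (EuclideanSpace ℝ (Fin N)) := {x | x ∈ X ∧ a ≤ s x}

/-- Interval level set `X^a_b`. -/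
def ival (X : Set (EuclideanSpace ℝ (Fin N))) (s : EuclideanSpace ℝ (Fin N) → ℝ) (a b : ℝ) :
    Set (EuclideanSpace ℝ (Fin N)) := {x | x ∈ X ∧ a ≤ s x ∧ s x ≤ b}

/-- The parameter space `Ω = {(v₁,v₂) : 0 < v₁ < v₂ < 1}`. -/
def Omega : Set (ℝ × ℝ) := {p | 0 < p.1 ∧ p.1 < p.2 ∧ p.2 < 1}

/-- The stratification diagram `D_v(X,s) = (X_{≤v₂}, X^{v₁}_{v₂}, X_{≥v₁})`. -/
def Dv (X : Set (EuclideanSpace ℝ (Fin N))) (s : EuclideanSpace ℝ (Fin N) → ℝ) (v : ℝ × ℝ) :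
    Set (EuclideanSpace ℝ (Fin N)) × Set (EuclideanSpace ℝ (Fin N)) ×
      Set (EuclideanSpace ℝ (Fin N)) :=
  (sub X s v.2, ival X s v.1 v.2, supl X s v.1)

/-- Maximum of the three componentwise Hausdorff distances between two diagram triples. -/
noncomputable def diagDist
    (D D' : Set (EuclideanSpace ℝ (Fin N)) × Set (EuclideanSpace ℝ (Fin N)) ×
      Set (EuclideanSpace ℝ (Fin N))) : ℝ≥0∞ :=
  max (EMetric.hausdorffEdist D.1 D'.1)
    (max (EMetric.hausdorffEdist D.2.1 D'.2.1) (EMetric.hausdorffEdist D.2.2 D'.2.2))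

/-- Two strongly stratified samples are `δ`-close. -/
def StronglyClose (δ : ℝ) (X X' : Set (EuclideanSpace ℝ (Fin N)))
    (s s' : EuclideanSpace ℝ (Fin N) → ℝ) : Prop :=
  (∀ x ∈ X, ∃ y ∈ X', ‖x - y‖ ≤ δ ∧ |s x - s' y| ≤ δ) ∧
  (∀ y ∈ X', ∃ x ∈ X, ‖x - y‖ ≤ δ ∧ |s x - s' y| ≤ δ)

/-- A strongly stratified sample `(X,s)` has cylinder structure if, with
`L := s⁻¹({1/2})`, there is a homeomorphism `f : s⁻¹((0,1)) ≃ₜ L × (0,1)` over `(0,1)`. -/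
def HasCylinderStructure (X : Set (EuclideanSpace ℝ (Fin N)))
    (s : EuclideanSpace ℝ (Fin N) → ℝ) : Prop :=
  ∃ f : {x : EuclideanSpace ℝ (Fin N) // x ∈ X ∧ s x ∈ Set.Ioo (0 : ℝ) 1} ≃ₜ
      ({x : EuclideanSpace ℝ (Fin N) // x ∈ X ∧ s x = 1 / 2} × Set.Ioo (0 : ℝ) 1),
    ∀ x, ((f x).2 : ℝ) = s x.1

private lemma push {N : ℕ} {X : Set (EuclideanSpace ℝ (Fin N))} {s : EuclideanSpace ℝ (Fin N) → ℝ}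
    (hX : IsCompact X) (hcont : ContinuousOn s X) (hcyl : HasCylinderStructure X s)
    {ε c d : ℝ} (hε : 0 < ε) (hc : 0 < c) (hd : d < 1) (hcd : c ≤ d) :
    ∃ η > 0, ∀ x ∈ X, s x ∈ Set.Ioo (0:ℝ) 1 → ∀ t ∈ Set.Icc c d, |s x - t| ≤ η →
      ∃ z ∈ X, s z = t ∧ ‖x - z‖ ≤ ε := by
  obtain ⟨f, hf⟩ := hcyl
  -- the "cylinder coordinates to space" map
  let G : {x : EuclideanSpace ℝ (Fin N) // x ∈ X ∧ s x = 1 / 2} × Set.Ioo (0:ℝ) 1 →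
      EuclideanSpace ℝ (Fin N) := fun p => (f.symm p : _)
  have hGcont : Continuous G := continuous_subtype_val.comp f.symm.continuous
  have hGX : ∀ p, G p ∈ X := fun p => (f.symm p).2.1
  have hGs : ∀ p, s (G p) = (p.2 : ℝ) := by
    intro p
    have := hf (f.symm p)
    rw [f.apply_symm_apply] at this
    exact this.symm
  -- compactness of L
  have hLset : IsCompact {x : EuclideanSpace ℝ (Fin N) | x ∈ X ∧ s x = 1/2} := by
    haveI hXc : CompactSpace X := isCompact_iff_compactSpace.mp hX
    have hcl : IsClosed {x : X | s x.1 = 1/2} := by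
      have : Continuous fun x : X => s x.1 := hcont.restrict
      exact isClosed_eq this continuous_const
    have := (hcl.isCompact).image (continuous_subtype_val (p := fun x => x ∈ X))
    convert this using 1
    ext x
    simp only [Set.mem_image, Set.mem_setOf_eq]
    constructor
    · rintro ⟨h1, h2⟩; exact ⟨⟨x, h1⟩, h2, rfl⟩
    · rintro ⟨⟨y, hy⟩, h2, rfl⟩; exact ⟨hy, h2⟩
  haveI hLcomp : CompactSpace {x : EuclideanSpace ℝ (Fin N) // x ∈ X ∧ s x = 1/2} :=
    isCompact_iff_compactSpace.mp hLset
  -- the compact parameter window [c/2, (1+d)/2]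
  have hST : IsCompact {t : Set.Ioo (0:ℝ) 1 | (t : ℝ) ∈ Set.Icc (c/2) ((1+d)/2)} := by
    have hemb : Topology.IsEmbedding (Subtype.val : Set.Ioo (0:ℝ) 1 → ℝ) :=
      Topology.IsEmbedding.subtypeVal
    rw [hemb.isCompact_iff]
    have himg : (Subtype.val : Set.Ioo (0:ℝ) 1 → ℝ) ''
        {t : Set.Ioo (0:ℝ) 1 | (t : ℝ) ∈ Set.Icc (c/2) ((1+d)/2)} = Set.Icc (c/2) ((1+d)/2) := by
      ext t
      simp only [Set.mem_image, Set.mem_setOf_eq]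
      constructor
      · rintro ⟨⟨y, hy⟩, h2, rfl⟩; exact h2
      · intro ht
        refine ⟨⟨t, ⟨by linarith [ht.1], by linarith [ht.2]⟩⟩, ht, rfl⟩
    rw [himg]
    exact isCompact_Icc
  set K := (Set.univ : Set {x : EuclideanSpace ℝ (Fin N) // x ∈ X ∧ s x = 1/2}) ×ˢ
    {t : Set.Ioo (0:ℝ) 1 | (t : ℝ) ∈ Set.Icc (c/2) ((1+d)/2)} with hKdef
  have hKcomp : IsCompact K := isCompact_univ.prod hST
  have huc : UniformContinuousOn G K :=
    hKcomp.uniformContinuousOn_of_continuous hGcont.continuousOn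
  obtain ⟨η₀, hη₀, H⟩ := Metric.uniformContinuousOn_iff_le.mp huc ε hε
  refine ⟨min η₀ (min (c/2) ((1-d)/2)), lt_min hη₀ (lt_min (by linarith) (by linarith)), ?_⟩
  intro x hxX hx01 t ht hclose
  have hη1 : min η₀ (min (c/2) ((1-d)/2)) ≤ η₀ := min_le_left _ _
  have hη2 : min η₀ (min (c/2) ((1-d)/2)) ≤ c/2 := le_trans (min_le_right _ _) (min_le_left _ _)
  have hη3 : min η₀ (min (c/2) ((1-d)/2)) ≤ (1-d)/2 :=
    le_trans (min_le_right _ _) (min_le_right _ _)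
  obtain ⟨hc1, hc2⟩ := abs_le.mp hclose
  have hsx_mem : s x ∈ Set.Icc (c/2) ((1+d)/2) := by
    constructor
    · linarith [ht.1]
    · linarith [ht.2]
  set p := f ⟨x, hxX, hx01⟩ with hpdef
  have hpx : G p = x := by
    simp only [G, hpdef, f.symm_apply_apply]
  have hp2 : (p.2 : ℝ) = s x := hf _
  have ht01 : t ∈ Set.Ioo (0:ℝ) 1 := ⟨lt_of_lt_of_le hc ht.1, lt_of_le_of_lt ht.2 hd⟩
  set q : {x : EuclideanSpace ℝ (Fin N) // x ∈ X ∧ s x = 1/2} × Set.Ioo (0:ℝ) 1 :=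
    (p.1, ⟨t, ht01⟩) with hqdef
  have hpK : p ∈ K := by
    refine ⟨Set.mem_univ _, ?_⟩
    simp only [Set.mem_setOf_eq, hp2]
    exact hsx_mem
  have hqK : q ∈ K := by
    refine ⟨Set.mem_univ _, ?_⟩
    simp only [hqdef, Set.mem_setOf_eq]
    exact ⟨by linarith [ht.1], by linarith [ht.2]⟩
  have hdistpq : dist p q ≤ η₀ := by
    rw [Prod.dist_eq]
    apply max_le
    · have : dist p.1 q.1 = 0 := by rw [hqdef]; simp
      rw [this]; linarith
    · have : dist p.2 q.2 = |s x - t| := by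
        rw [hqdef, Subtype.dist_eq, Real.dist_eq, hp2]
      rw [this]
      exact le_trans hclose hη1
  have hfin := H p hpK q hqK hdistpq
  refine ⟨G q, hGX q, ?_, ?_⟩
  · rw [hGs q]
  · rw [← dist_eq_norm, ← hpx]
    exact hfin


private lemma ival_stable {N : ℕ} {X : Set (EuclideanSpace ℝ (Fin N))}
    {s : EuclideanSpace ℝ (Fin N) → ℝ}
    (hX : IsCompact X) (hs : ∀ x ∈ X, s x ∈ Set.Icc (0:ℝ) 1) (hcont : ContinuousOn s X)
    (hcyl : HasCylinderStructure X s)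
    {ε a b : ℝ} (hε : 0 < ε) (ha : 0 ≤ a) (hb : b ≤ 1) (hab : a < b) :
    ∃ δ > 0, ∀ (X' : Set (EuclideanSpace ℝ (Fin N))) (s' : EuclideanSpace ℝ (Fin N) → ℝ),
      (∀ y ∈ X', s' y ∈ Set.Icc (0:ℝ) 1) → StronglyClose δ X X' s s' →
      EMetric.hausdorffEdist (ival X s a b) (ival X' s' a b) ≤ ENNReal.ofReal ε := by
  set c : ℝ := if 0 < a then a else b/2 with hcdef
  set d : ℝ := if b < 1 then b else (a+1)/2 with hddef
  have hca : 0 < a → c = a := fun h => by rw [hcdef]; exact if_pos h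
  have hca' : ¬ 0 < a → c = b/2 := fun h => by rw [hcdef]; exact if_neg h
  have hdb : b < 1 → d = b := fun h => by rw [hddef]; exact if_pos h
  have hdb' : ¬ b < 1 → d = (a+1)/2 := fun h => by rw [hddef]; exact if_neg h
  have ha1 : a < 1 := lt_of_lt_of_le hab hb
  have hc0 : 0 < c := by
    by_cases h : 0 < a
    · rw [hca h]; exact h
    · rw [hca' h]; push_neg at h; linarith
  have hd1 : d < 1 := by
    by_cases h : b < 1
    · rw [hdb h]; exact h
    · rw [hdb' h]; linarith
  have hcd : c ≤ d := by
    by_cases h : 0 < a <;> by_cases h' : b < 1 <;>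
      [rw [hca h, hdb h']; rw [hca h, hdb' h']; rw [hca' h, hdb h']; rw [hca' h, hdb' h']] <;>
      push_neg at * <;> linarith
  obtain ⟨η, hη, hpush⟩ := push hX hcont hcyl (half_pos hε) hc0 hd1 hcd
  set δ : ℝ := min η (min (ε/2) (min (c/2) (min ((1-d)/2) ((b-a)/2)))) with hδdef
  have hδpos : 0 < δ :=
    lt_min hη (lt_min (half_pos hε) (lt_min (by linarith) (lt_min (by linarith) (by linarith))))
  have hδη : δ ≤ η := min_le_left _ _
  have hδε : δ ≤ ε/2 := le_trans (min_le_right _ _) (min_le_left _ _)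
  have hδc : δ ≤ c/2 := le_trans (min_le_right _ _) (le_trans (min_le_right _ _) (min_le_left _ _))
  have hδd : δ ≤ (1-d)/2 := le_trans (min_le_right _ _)
    (le_trans (min_le_right _ _) (le_trans (min_le_right _ _) (min_le_left _ _)))
  have hδab : δ ≤ (b-a)/2 := le_trans (min_le_right _ _)
    (le_trans (min_le_right _ _) (le_trans (min_le_right _ _) (min_le_right _ _)))
  -- membership of push targets in [c,d]
  have hIa : 0 < a → (a ∈ Set.Icc c d ∧ a + δ ∈ Set.Icc c d) := by
    intro h
    rw [hca h]
    by_cases h' : b < 1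
    · rw [hdb h']
      exact ⟨⟨le_refl _, hab.le⟩, by constructor <;> linarith⟩
    · rw [hdb' h']
      push_neg at h'
      exact ⟨⟨le_refl _, by linarith⟩, by constructor <;> linarith⟩
  have hIb : b < 1 → (b ∈ Set.Icc c d ∧ b - δ ∈ Set.Icc c d) := by
    intro h
    rw [hdb h]
    by_cases h' : 0 < a
    · rw [hca h']
      exact ⟨⟨hab.le, le_refl _⟩, by constructor <;> linarith⟩
    · rw [hca' h']
      push_neg at h'
      exact ⟨⟨by linarith, le_refl _⟩, by constructor <;> linarith⟩
  refine ⟨δ, hδpos, ?_⟩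
  intro X' s' hs' hclose
  apply EMetric.hausdorffEdist_le_of_mem_edist
  · -- direction 1 : points of ival X s a b are approximated in ival X' s' a b
    rintro x ⟨hxX, hax, hxb⟩
    have hz : ∃ z ∈ X, ‖x - z‖ ≤ ε/2 ∧ (a = 0 ∨ a + δ ≤ s z) ∧ (b = 1 ∨ s z ≤ b - δ) := by
      by_cases ha0 : 0 < a
      · by_cases hb1 : b < 1
        · rcases lt_or_ge (s x) (a + δ) with h1 | h1
          · have hx01 : s x ∈ Set.Ioo (0:ℝ) 1 :=
              ⟨lt_of_lt_of_le ha0 hax, lt_of_le_of_lt hxb hb1⟩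
            obtain ⟨z, hzX, hz1, hz2⟩ := hpush x hxX hx01 (a+δ) (hIa ha0).2
              (abs_le.mpr ⟨by linarith, by linarith⟩)
            exact ⟨z, hzX, hz2, Or.inr (by rw [hz1]), Or.inr (by rw [hz1]; linarith)⟩
          · rcases le_or_gt (s x) (b - δ) with h2 | h2
            · exact ⟨x, hxX, by simp; positivity, Or.inr h1, Or.inr h2⟩
            · have hx01 : s x ∈ Set.Ioo (0:ℝ) 1 :=
                ⟨lt_of_lt_of_le ha0 hax, lt_of_le_of_lt hxb hb1⟩
              obtain ⟨z, hzX, hz1, hz2⟩ := hpush x hxX hx01 (b-δ) (hIb hb1).2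
                (abs_le.mpr ⟨by linarith, by linarith⟩)
              exact ⟨z, hzX, hz2, Or.inr (by rw [hz1]; linarith), Or.inr (by rw [hz1])⟩
        · -- a > 0, b = 1
          have hb1' : b = 1 := le_antisymm hb (not_lt.mp hb1)
          rcases lt_or_ge (s x) (a + δ) with h1 | h1
          · have hx01 : s x ∈ Set.Ioo (0:ℝ) 1 := by
              refine ⟨lt_of_lt_of_le ha0 hax, ?_⟩
              have := ((hIa ha0).2).2
              linarith
            obtain ⟨z, hzX, hz1, hz2⟩ := hpush x hxX hx01 (a+δ) (hIa ha0).2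
              (abs_le.mpr ⟨by linarith, by linarith⟩)
            exact ⟨z, hzX, hz2, Or.inr (by rw [hz1]), Or.inl hb1'⟩
          · exact ⟨x, hxX, by simp; positivity, Or.inr h1, Or.inl hb1'⟩
      · -- a = 0
        have ha0' : a = 0 := le_antisymm (not_lt.mp ha0) ha
        by_cases hb1 : b < 1
        · rcases le_or_gt (s x) (b - δ) with h2 | h2
          · exact ⟨x, hxX, by simp; positivity, Or.inl ha0', Or.inr h2⟩
          · have hx01 : s x ∈ Set.Ioo (0:ℝ) 1 := by
              refine ⟨?_, lt_of_le_of_lt hxb hb1⟩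
              have := ((hIb hb1).2).1
              linarith
            obtain ⟨z, hzX, hz1, hz2⟩ := hpush x hxX hx01 (b-δ) (hIb hb1).2
              (abs_le.mpr ⟨by linarith, by linarith⟩)
            exact ⟨z, hzX, hz2, Or.inl ha0', Or.inr (by rw [hz1])⟩
        · exact ⟨x, hxX, by simp; positivity, Or.inl ha0',
            Or.inl (le_antisymm hb (not_lt.mp hb1))⟩
    obtain ⟨z, hzX, hxz, hzl, hzr⟩ := hz
    obtain ⟨y, hyX', hzy, hszy⟩ := hclose.1 z hzX
    obtain ⟨hszy1, hszy2⟩ := abs_le.mp hszy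
    refine ⟨y, ⟨hyX', ?_, ?_⟩, ?_⟩
    · rcases hzl with h | h
      · rw [h]; exact (hs' y hyX').1
      · linarith
    · rcases hzr with h | h
      · rw [h]; exact (hs' y hyX').2
      · linarith
    · rw [edist_le_ofReal hε.le]
      calc dist x y ≤ dist x z + dist z y := dist_triangle _ _ _
        _ = ‖x - z‖ + ‖z - y‖ := by rw [dist_eq_norm, dist_eq_norm]
        _ ≤ ε/2 + δ := add_le_add hxz hzy
        _ ≤ ε := by linarith
  · -- direction 2
    rintro y ⟨hyX', hay, hyb⟩
    obtain ⟨x, hxX, hxy, hsxy⟩ := hclose.2 y hyX'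
    obtain ⟨hsxy1, hsxy2⟩ := abs_le.mp hsxy
    obtain ⟨hsx0, hsx1⟩ := hs x hxX
    have hz : ∃ z ∈ X, a ≤ s z ∧ s z ≤ b ∧ ‖x - z‖ ≤ ε/2 := by
      rcases lt_or_ge (s x) a with h1 | h1
      · have ha0 : 0 < a := lt_of_le_of_lt hsx0 h1
        have hceqa : c = a := hca ha0
        have hx01 : s x ∈ Set.Ioo (0:ℝ) 1 := ⟨by linarith, by linarith⟩
        obtain ⟨z, hzX, hz1, hz2⟩ := hpush x hxX hx01 a (hIa ha0).1
          (abs_le.mpr ⟨by linarith, by linarith⟩)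
        exact ⟨z, hzX, le_of_eq hz1.symm, by rw [hz1]; exact hab.le, hz2⟩
      · rcases lt_or_ge b (s x) with h2 | h2
        · have hb1 : b < 1 := by
            rcases lt_or_eq_of_le hb with h | h
            · exact h
            · exfalso; rw [h] at h2; linarith
          have hdeqb : d = b := hdb hb1
          have hx01 : s x ∈ Set.Ioo (0:ℝ) 1 :=
            ⟨lt_trans (lt_of_le_of_lt ha hab) h2, by linarith⟩
          obtain ⟨z, hzX, hz1, hz2⟩ := hpush x hxX hx01 b (hIb hb1).1
            (abs_le.mpr ⟨by linarith, by linarith⟩)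
          exact ⟨z, hzX, by rw [hz1]; exact hab.le, le_of_eq hz1, hz2⟩
        · exact ⟨x, hxX, h1, h2, by simp; positivity⟩
    obtain ⟨z, hzX, hza, hzb, hxz⟩ := hz
    refine ⟨z, ⟨hzX, hza, hzb⟩, ?_⟩
    rw [edist_le_ofReal hε.le]
    calc dist y z ≤ dist y x + dist x z := dist_triangle _ _ _
      _ = ‖x - y‖ + ‖x - z‖ := by rw [dist_comm y x, dist_eq_norm, dist_eq_norm]
      _ ≤ δ + ε/2 := add_le_add hxy hxz
      _ ≤ ε := by linarith


private lemma close_mono {N : ℕ} {δ δ' : ℝ} (h : δ ≤ δ')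
    {X X' : Set (EuclideanSpace ℝ (Fin N))} {s s' : EuclideanSpace ℝ (Fin N) → ℝ}
    (hc : StronglyClose δ X X' s s') : StronglyClose δ' X X' s s' := by
  obtain ⟨h1, h2⟩ := hc
  constructor
  · intro x hx
    obtain ⟨y, hy, hy1, hy2⟩ := h1 x hx
    exact ⟨y, hy, le_trans hy1 h, le_trans hy2 h⟩
  · intro y hy
    obtain ⟨x, hx, hx1, hx2⟩ := h2 y hy
    exact ⟨x, hx, le_trans hx1 h, le_trans hx2 h⟩

private lemma ambient_stable {N : ℕ} {ε : ℝ} (hε : 0 < ε)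
    {X X' : Set (EuclideanSpace ℝ (Fin N))} {s s' : EuclideanSpace ℝ (Fin N) → ℝ}
    (hc : StronglyClose ε X X' s s') :
    EMetric.hausdorffEdist X X' ≤ ENNReal.ofReal ε := by
  apply EMetric.hausdorffEdist_le_of_mem_edist
  · intro x hx
    obtain ⟨y, hy, hy1, _⟩ := hc.1 x hx
    exact ⟨y, hy, by rw [edist_le_ofReal hε.le, dist_eq_norm]; exact hy1⟩
  · intro y hy
    obtain ⟨x, hx, hx1, _⟩ := hc.2 y hy
    refine ⟨x, hx, ?_⟩
    rw [edist_le_ofReal hε.le, dist_comm, dist_eq_norm]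
    exact hx1

private lemma sub_eq_ival {N : ℕ} {X : Set (EuclideanSpace ℝ (Fin N))}
    {s : EuclideanSpace ℝ (Fin N) → ℝ} (h0 : ∀ x ∈ X, 0 ≤ s x) (u : ℝ) :
    sub X s u = ival X s 0 u := by
  ext x
  simp only [sub, ival, Set.mem_setOf_eq]
  exact ⟨fun ⟨h1, h2⟩ => ⟨h1, h0 x h1, h2⟩, fun ⟨h1, _, h3⟩ => ⟨h1, h3⟩⟩

private lemma supl_eq_ival {N : ℕ} {X : Set (EuclideanSpace ℝ (Fin N))}
    {s : EuclideanSpace ℝ (Fin N) → ℝ} (h1 : ∀ x ∈ X, s x ≤ 1) (a : ℝ) :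
    supl X s a = ival X s a 1 := by
  ext x
  simp only [supl, ival, Set.mem_setOf_eq]
  exact ⟨fun ⟨hx, h2⟩ => ⟨hx, h2, h1 x hx⟩, fun ⟨hx, h2, _⟩ => ⟨hx, h2⟩⟩

/-- At a compact strongly stratified sample with continuous stratification and cylinder
structure, the forgetful map `F_u` and the diagram map `D_v` are continuous. -/
theorem forgetful_and_diagram_continuous {N : ℕ}
    (X : Set (EuclideanSpace ℝ (Fin N))) (s : EuclideanSpace ℝ (Fin N) → ℝ)
    (hX : IsCompact X) (hs : ∀ x ∈ X, s x ∈ Set.Icc (0 : ℝ) 1)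
    (hcont : ContinuousOn s X)
    (hcyl : HasCylinderStructure X s) :
    (∀ u ∈ Set.Ioo (0 : ℝ) 1, ∀ ε : ℝ, 0 < ε → ∃ δ : ℝ, 0 < δ ∧
      ∀ (X' : Set (EuclideanSpace ℝ (Fin N))) (s' : EuclideanSpace ℝ (Fin N) → ℝ),
        (∀ y ∈ X', s' y ∈ Set.Icc (0 : ℝ) 1) →
        StronglyClose δ X X' s s' →
        max (EMetric.hausdorffEdist X X')
          (EMetric.hausdorffEdist (sub X s u) (sub X' s' u)) ≤ ENNReal.ofReal ε) ∧
    (∀ v ∈ Omega, ∀ ε : ℝ, 0 < ε → ∃ δ : ℝ, 0 < δ ∧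
      ∀ (X' : Set (EuclideanSpace ℝ (Fin N))) (s' : EuclideanSpace ℝ (Fin N) → ℝ),
        (∀ y ∈ X', s' y ∈ Set.Icc (0 : ℝ) 1) →
        StronglyClose δ X X' s s' →
        diagDist (Dv X s v) (Dv X' s' v) ≤ ENNReal.ofReal ε) := by
  constructor
  · -- continuity of the forgetful map
    intro u hu ε hε
    obtain ⟨δ₁, hδ₁, H₁⟩ := ival_stable hX hs hcont hcyl hε (le_refl (0:ℝ)) hu.2.le hu.1
    refine ⟨min δ₁ ε, lt_min hδ₁ hε, ?_⟩
    intro X' s' hs' hclose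
    apply max_le
    · exact ambient_stable hε (close_mono (min_le_right _ _) hclose)
    · rw [sub_eq_ival (fun x hx => (hs x hx).1) u, sub_eq_ival (fun y hy => (hs' y hy).1) u]
      exact H₁ X' s' hs' (close_mono (min_le_left _ _) hclose)
  · -- continuity of the diagram map
    intro v hv ε hε
    obtain ⟨hv1, hv12, hv2⟩ := hv
    obtain ⟨δ₁, hδ₁, H₁⟩ := ival_stable hX hs hcont hcyl hε (le_refl (0:ℝ)) hv2.le
      (lt_trans hv1 hv12)
    obtain ⟨δ₂, hδ₂, H₂⟩ := ival_stable hX hs hcont hcyl hε hv1.le hv2.le hv12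
    obtain ⟨δ₃, hδ₃, H₃⟩ := ival_stable hX hs hcont hcyl hε hv1.le (le_refl (1:ℝ))
      (lt_trans hv12 hv2)
    refine ⟨min δ₁ (min δ₂ δ₃), lt_min hδ₁ (lt_min hδ₂ hδ₃), ?_⟩
    intro X' s' hs' hclose
    simp only [diagDist, Dv]
    apply max_le
    · rw [sub_eq_ival (fun x hx => (hs x hx).1) v.2, sub_eq_ival (fun y hy => (hs' y hy).1) v.2]
      exact H₁ X' s' hs' (close_mono (min_le_left _ _) hclose)
    apply max_le
    · exact H₂ X' s' hs'
        (close_mono (le_trans (min_le_right _ _) (min_le_left _ _)) hclose)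
    · rw [supl_eq_ival (fun x hx => (hs x hx).2) v.1,
        supl_eq_ival (fun y hy => (hs' y hy).2) v.1]
      exact H₃ X' s' hs'
        (close_mono (le_trans (min_le_right _ _) (min_le_right _ _)) hclose)

end Stmt10
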